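/- (Unconditional stability of RK2 preconditioned by second-order TASE at α = 3/2.) For every complex z with Re z ≤ 0, setting w = z * (-(1 - (3/2)*z)⁻¹ + 4*(2 - (3/2)*z)⁻¹), the stability function of the second-order Runge-Kutta method satisfies |1 + w + w²/2| ≤ 1. -/

import Mathlib

/-!
Clearing denominators, `1 + w + w²/2 = N(z) / D(z)` with `D(z) = (2 - 3z)²(4 - 3z)²`, whose zeros
`2/3, 4/3` lie in the right half-plane. Writing `u = -Re z` and `v = (Im z)²`, the difference
`|D(z)|² - |N(z)|²` is a polynomial in `u` and `v` all of whose coefficients are nonnegative,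
so it is nonnegative on the closed left half-plane `u ≥ 0`.
-/

open Complex

noncomputable def tase2 (α z : ℂ) : ℂ := -(1 - α * z)⁻¹ + 4 * (2 - α * z)⁻¹

noncomputable def rk2Stability (w : ℂ) : ℂ := 1 + w + w ^ 2 / 2

def rk2Tase2Margin (u v : ℝ) : ℝ :=
  8192 * u + 65536 * u ^ 2 + 206848 * u ^ 3 + 328448 * u ^ 4 + 283104 * u ^ 5
    + 141264 * u ^ 6 + 40824 * u ^ 7
    + v * (77824 * u + 348160 * u ^ 2 + 524736 * u ^ 3 + 340848 * u ^ 4 + 122472 * u ^ 5)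
    + v ^ 2 * (19712 + 241632 * u + 257904 * u ^ 2 + 122472 * u ^ 3)
    + v ^ 3 * (58320 + 40824 * u)

lemma rk2Tase2Margin_nonneg {u v : ℝ} (hu : 0 ≤ u) (hv : 0 ≤ v) : 0 ≤ rk2Tase2Margin u v := by
  unfold rk2Tase2Margin
  positivity

lemma sub_mul_ne_zero_of_re_nonpos {c α : ℝ} (hc : 0 < c) (hα : 0 ≤ α) {z : ℂ}
    (hz : z.re ≤ 0) : (c : ℂ) - α * z ≠ 0 := by
  intro h
  have hre : c - α * z.re = 0 := by simpa using congrArg re h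
  nlinarith [mul_nonneg hα (neg_nonneg.mpr hz)]

lemma rk2Stability_mul_tase2_three_halves {z : ℂ} (h₂ : 2 - 3 * z ≠ 0) (h₄ : 4 - 3 * z ≠ 0) :
    rk2Stability (z * tase2 (3 / 2) z) =
      (64 - 224 * z + 212 * z ^ 2 - 72 * z ^ 3 + 81 * z ^ 4) /
        ((2 - 3 * z) ^ 2 * (4 - 3 * z) ^ 2) := by
  have e₁ : (1 : ℂ) - 3 / 2 * z = (2 - 3 * z) / 2 := by ring
  have e₂ : (2 : ℂ) - 3 / 2 * z = (4 - 3 * z) / 2 := by ring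
  -- `field_simp` looks for the nonvanishing facts in its own normal form `c - z * 3`
  have h₂' : 2 - z * 3 ≠ 0 := by rwa [mul_comm]
  have h₄' : 4 - z * 3 ≠ 0 := by rwa [mul_comm]
  rw [rk2Stability, tase2, e₁, e₂, inv_div, inv_div]
  field_simp
  ring

lemma normSq_den_sub_normSq_num (z : ℂ) :
    normSq ((2 - 3 * z) ^ 2 * (4 - 3 * z) ^ 2)
        - normSq (64 - 224 * z + 212 * z ^ 2 - 72 * z ^ 3 + 81 * z ^ 4) =
      rk2Tase2Margin (-z.re) (z.im ^ 2) := by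
  obtain ⟨x, y⟩ := z
  simp only [rk2Tase2Margin, normSq_apply, pow_succ, pow_zero, one_mul, mul_re, mul_im, sub_re,
    sub_im, add_re, add_im, re_ofNat, im_ofNat]
  ring

lemma norm_num_le_norm_den {z : ℂ} (hz : z.re ≤ 0) :
    ‖64 - 224 * z + 212 * z ^ 2 - 72 * z ^ 3 + 81 * z ^ 4‖ ≤ ‖(2 - 3 * z) ^ 2 * (4 - 3 * z) ^ 2‖ := by
  have hmargin := rk2Tase2Margin_nonneg (neg_nonneg.mpr hz) (sq_nonneg z.im)
  rw [← normSq_den_sub_normSq_num, sub_nonneg] at hmargin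
  simpa only [norm_def] using Real.sqrt_le_sqrt hmargin

/-- Unconditional stability of the second-order Runge–Kutta method preconditioned by
the second-order TASE operator at `α = 3/2`: for every `z` in the closed left
half-plane, with `w = z T²(3/2, z)`, the RK2 stability function satisfies
`|1 + w + w²/2| ≤ 1`. -/
theorem rk2_tase2_unconditionally_stable (z : ℂ) (hz : z.re ≤ 0) :
    ‖(1 + z * (-(1 - (3 / 2) * z)⁻¹ + 4 * (2 - (3 / 2) * z)⁻¹)
          + (z * (-(1 - (3 / 2) * z)⁻¹ + 4 * (2 - (3 / 2) * z)⁻¹)) ^ 2 / 2)‖ ≤ 1 := by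
  have h₂ : 2 - 3 * z ≠ 0 := by
    exact_mod_cast sub_mul_ne_zero_of_re_nonpos (c := 2) (α := 3) two_pos (by norm_num) hz
  have h₄ : 4 - 3 * z ≠ 0 := by
    exact_mod_cast sub_mul_ne_zero_of_re_nonpos (c := 4) (α := 3) four_pos (by norm_num) hz
  change ‖rk2Stability (z * tase2 (3 / 2) z)‖ ≤ 1
  rw [rk2Stability_mul_tase2_three_halves h₂ h₄, norm_div,
    div_le_one (norm_pos_iff.mpr (by positivity))]
  exact norm_num_le_norm_den hz
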